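/- arXiv:2305.00269 — 2 statements merged into one kernel-verified Lean document; each statement's English description precedes it below -/
import Mathlib

section
/- The number of isomorphism classes of magmas on a set with cardinality n equals (1/n!) · ∑_{σ ∈ S_n} ∏_{r,s=1}^n (∑_{d ∣ lcm(r,s)} d · j_d(σ))^{gcd(r,s) · j_r(σ) · j_s(σ)}, where the sum ranges over all permutations σ of Fin n and (j_i(σ))_i denotes the cycle type of σ. -/
/-!
Burnside's lemma for the action of `Perm (Fin n)` on binary operations by transport of structure
reduces the count to the number of operations fixed by each `φ`, i.e. of maps
`g : Fin n × Fin n → Fin n` with `g ∘ (φ × φ) = φ ∘ g`. Such a map may be chosen freely on one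
representative of each cycle of `φ × φ`, subject only to sending it to a point whose period
divides the length `m` of the cycle; there are `∑_{d ∣ m} d j_d(φ)` such points. A pair of points
on cycles of `φ` of lengths `r` and `s` lies on a cycle of `φ × φ` of length `lcm(r, s)`, so the
`r j_r(φ) · s j_s(φ)` such pairs form `gcd(r, s) j_r(φ) j_s(φ)` cycles.
-/

/-- Two binary operations on `Fin n` are isomorphic as magmas if there is a bijection
of `Fin n` transporting one operation to the other. -/
def MagmaIso (n : ℕ) (f g : Fin n → Fin n → Fin n) : Prop :=
  ∃ φ : Fin n ≃ Fin n, ∀ a a' : Fin n, φ (f a a') = g (φ a) (φ a')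

/-- `cycleCount σ i` is the number of `i`-cycles in the disjoint cycle decomposition of the
permutation `σ` (fixed points counted as `1`-cycles). -/
noncomputable def cycleCount {X : Type*} (σ : Equiv.Perm X) (i : ℕ) : ℕ :=
  Nat.card {a : X // Function.minimalPeriod (⇑σ) a = i} / i

open Function Equiv MulAction Finset

theorem Function.iterate_eq_iterate_of_isPeriodicPt {α β : Type*} {f : α → α} {g : β → β}
    {x : α} {y : β} (hx : x ∈ periodicPts f) (hy : IsPeriodicPt g (minimalPeriod f x) y)
    {i j : ℕ} (h : f^[i] x = f^[j] x) : g^[i] y = g^[j] y := by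
  have hpos := minimalPeriod_pos_of_mem_periodicPts hx
  rw [← iterate_mod_minimalPeriod_eq (n := i), ← iterate_mod_minimalPeriod_eq (n := j),
    iterate_eq_iterate_iff_of_lt_minimalPeriod (Nat.mod_lt _ hpos) (Nat.mod_lt _ hpos)] at h
  rw [← hy.iterate_mod_apply i, ← hy.iterate_mod_apply j, h]

namespace Equiv.Perm

variable {α β : Type*}

/-- Fixed points of `τ` are cycles of length `1`. -/
abbrev Cycles (τ : Perm α) : Type _ := orbitRel.Quotient (Subgroup.zpowers τ) α

theorem minimalPeriod_perm_apply [Finite α] (σ : Perm α) (a : α) :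
    minimalPeriod σ (σ a) = minimalPeriod σ a :=
  minimalPeriod_apply (σ.injective.mem_periodicPts a)

theorem minimalPeriod_perm_pos [Finite α] (σ : Perm α) (a : α) : 0 < minimalPeriod σ a :=
  minimalPeriod_pos_of_mem_periodicPts (σ.injective.mem_periodicPts a)

theorem mem_orbit_zpowers_iff [Finite α] {τ : Perm α} {a b : α} :
    b ∈ orbit (Subgroup.zpowers τ) a ↔ ∃ k : ℕ, τ^[k] a = b := by
  constructor
  · rintro ⟨⟨_, i, rfl⟩, rfl⟩
    obtain ⟨k, hk⟩ := SameCycle.exists_nat_pow_eq (⟨i, rfl⟩ : SameCycle τ a ((τ ^ i) a))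
    exact ⟨k, by rw [← coe_pow, hk]; rfl⟩
  · rintro ⟨k, rfl⟩
    exact ⟨⟨τ ^ k, pow_mem (Subgroup.mem_zpowers τ) k⟩, by simp [coe_pow]⟩

theorem exists_iterate_out_eq [Finite α] (τ : Perm α) (a : α) :
    ∃ k : ℕ, τ^[k] (Quotient.mk _ a : τ.Cycles).out = a :=
  mem_orbit_zpowers_iff.mp (orbitRel_apply.mp ((orbitRel _ α).symm (Quotient.mk_out a)))

theorem Cycles.mk_apply (τ : Perm α) (a : α) :
    (Quotient.mk _ (τ a) : τ.Cycles) = Quotient.mk _ a :=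
  Quotient.sound ⟨⟨τ, Subgroup.mem_zpowers τ⟩, rfl⟩

noncomputable def stepsFromOut [Finite α] (τ : Perm α) (a : α) : ℕ :=
  (τ.exists_iterate_out_eq a).choose

theorem iterate_stepsFromOut [Finite α] (τ : Perm α) (a : α) :
    τ^[τ.stepsFromOut a] (Quotient.mk _ a : τ.Cycles).out = a :=
  (τ.exists_iterate_out_eq a).choose_spec

/-- The inverse extends a choice of values along each cycle; this is well defined because each
value has a period dividing the length of its cycle. -/
noncomputable def semiconjEquivPi [Finite α] (τ : Perm α) (σ : β → β) :
    {g : α → β // Semiconj g τ σ} ≃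
      ∀ q : τ.Cycles, {y : β // IsPeriodicPt σ (minimalPeriod τ q.out) y} where
  toFun g q := ⟨g.1 q.out, (isPeriodicPt_minimalPeriod τ q.out).map g.2⟩
  invFun v := ⟨fun a => σ^[τ.stepsFromOut a] (v (Quotient.mk _ a)).1, fun a => by
    have h := τ.iterate_stepsFromOut (τ a)
    dsimp only
    rw [Cycles.mk_apply] at h ⊢
    rw [← iterate_succ_apply' σ]
    refine iterate_eq_iterate_of_isPeriodicPt (τ.injective.mem_periodicPts _) (v _).2 ?_
    rw [h, iterate_succ_apply', τ.iterate_stepsFromOut a]⟩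
  left_inv g := by
    ext a
    exact (g.2.iterate_right _ _).symm.trans (congrArg g.1 (τ.iterate_stepsFromOut a))
  right_inv v := by
    funext q
    apply Subtype.ext
    have h := τ.iterate_stepsFromOut q.out
    dsimp only
    generalize τ.stepsFromOut q.out = k at h ⊢
    rw [Quotient.out_eq] at h ⊢
    exact iterate_eq_iterate_of_isPeriodicPt (j := 0) (τ.injective.mem_periodicPts _) (v q).2 h

theorem card_semiconj [Finite α] (τ : Perm α) (σ : β → β) [Fintype τ.Cycles] :
    Nat.card {g : α → β // Semiconj g τ σ} =
      ∏ q : τ.Cycles, Nat.card {y : β // IsPeriodicPt σ (minimalPeriod τ q.out) y} := by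
  rw [Nat.card_congr (semiconjEquivPi τ σ), Nat.card_pi]

theorem card_fiber_cycles [Finite α] (τ : Perm α) (q : τ.Cycles) :
    Nat.card {a : α // (Quotient.mk _ a : τ.Cycles) = q} = minimalPeriod τ q.out := by
  have : Fintype (orbit (Subgroup.zpowers τ) q.out) := Fintype.ofFinite _
  change _ = minimalPeriod (τ • ·) q.out
  rw [MulAction.minimalPeriod_eq_card, ← Nat.card_eq_fintype_card]
  refine Nat.card_congr (Equiv.subtypeEquivRight fun a => ?_)
  conv_lhs => rw [← Quotient.out_eq q]
  rw [Quotient.eq, orbitRel_apply]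

theorem card_eq_mul_card_cycles [Fintype α] (τ : Perm α) {P : α → Prop}
    (hP : ∀ a, P (τ a) ↔ P a) {d : ℕ} (hd : ∀ a, P a → minimalPeriod τ a = d) :
    Nat.card {a // P a} = d * Nat.card {q : τ.Cycles // P q.out} := by
  classical
  have hP_iterate (k : ℕ) (a : α) : P (τ^[k] a) ↔ P a := by
    induction k with
    | zero => rfl
    | succ k ih => rw [iterate_succ_apply', hP, ih]
  have hP_out (a : α) : P (Quotient.mk _ a : τ.Cycles).out ↔ P a := by
    have := hP_iterate (τ.stepsFromOut a) (Quotient.mk _ a : τ.Cycles).out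
    rwa [iterate_stepsFromOut, Iff.comm] at this
  have hpreimage : {a : α | P a} =
      (fun a => (Quotient.mk _ a : τ.Cycles)) ⁻¹' ↑({q | P q.out} : Finset τ.Cycles) := by
    ext a
    simp [hP_out]
  rw [← Set.coe_ofPred, hpreimage, card_preimage_eq_sum_card_image_eq (fun _ _ => Set.toFinite _),
    sum_congr rfl fun q hq => (card_fiber_cycles τ q).trans (hd _ (mem_filter.1 hq).2),
    sum_const, smul_eq_mul, mul_comm, Nat.card_eq_fintype_card, Fintype.card_subtype]

theorem card_minimalPeriod_eq_mul_cycleCount [Fintype α] (σ : Perm α) (d : ℕ) :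
    Nat.card {a // minimalPeriod σ a = d} = d * cycleCount σ d := by
  have h := card_eq_mul_card_cycles σ (P := fun a => minimalPeriod σ a = d)
    (fun a => by rw [minimalPeriod_perm_apply]) fun _ => id
  rw [cycleCount, h, Nat.mul_div_cancel' (dvd_mul_right _ _)]

theorem card_isPeriodicPt [Fintype α] (σ : Perm α) {m : ℕ} (hm : m ≠ 0) :
    Nat.card {a // IsPeriodicPt σ m a} = ∑ d ∈ m.divisors, d * cycleCount σ d := by
  have h : {a | IsPeriodicPt σ m a} = minimalPeriod σ ⁻¹' ↑m.divisors := by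
    ext a
    simp [isPeriodicPt_iff_minimalPeriod_dvd, hm]
  rw [← Set.coe_ofPred, h, card_preimage_eq_sum_card_image_eq fun _ _ => Set.toFinite _]
  exact sum_congr rfl fun d _ => card_minimalPeriod_eq_mul_cycleCount σ d

theorem minimalPeriod_prodCongr (σ₁ : Perm α) (σ₂ : Perm β) (p : α × β) :
    minimalPeriod (prodCongr σ₁ σ₂) p = (minimalPeriod σ₁ p.1).lcm (minimalPeriod σ₂ p.2) :=
  minimalPeriod_prodMap σ₁ σ₂ p

theorem card_cycles_prodCongr [Fintype α] [Fintype β] (σ₁ : Perm α) (σ₂ : Perm β) {r s : ℕ}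
    (hr : r ≠ 0) (hs : s ≠ 0) :
    Nat.card {q : Cycles (prodCongr σ₁ σ₂) //
        minimalPeriod σ₁ q.out.1 = r ∧ minimalPeriod σ₂ q.out.2 = s} =
      r.gcd s * cycleCount σ₁ r * cycleCount σ₂ s := by
  have h := card_eq_mul_card_cycles (prodCongr σ₁ σ₂)
    (P := fun p => minimalPeriod σ₁ p.1 = r ∧ minimalPeriod σ₂ p.2 = s)
    (fun p => by simp only [prodCongr_apply, Prod.map_fst, Prod.map_snd, minimalPeriod_perm_apply])
    (fun p hp => by rw [minimalPeriod_prodCongr, hp.1, hp.2])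
  rw [Nat.card_congr (subtypeProdEquivProd (p := fun a => minimalPeriod σ₁ a = r)
    (q := fun b => minimalPeriod σ₂ b = s)), Nat.card_prod,
    card_minimalPeriod_eq_mul_cycleCount, card_minimalPeriod_eq_mul_cycleCount] at h
  refine Nat.eq_of_mul_eq_mul_left (Nat.pos_of_ne_zero (Nat.lcm_ne_zero hr hs)) ?_
  calc r.lcm s * Nat.card _ = r * cycleCount σ₁ r * (s * cycleCount σ₂ s) := h.symm
    _ = r.gcd s * r.lcm s * (cycleCount σ₁ r * cycleCount σ₂ s) := by rw [Nat.gcd_mul_lcm]; ring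
    _ = _ := by ring

theorem card_semiconj_prodCongr {γ : Type*} [Fintype α] [Fintype β] [Fintype γ]
    (σ₁ : Perm α) (σ₂ : Perm β) (σ : Perm γ) :
    Nat.card {g : α × β → γ // Semiconj g (prodCongr σ₁ σ₂) σ} =
      ∏ r ∈ Icc 1 (Fintype.card α), ∏ s ∈ Icc 1 (Fintype.card β),
        (∑ d ∈ (r.lcm s).divisors, d * cycleCount σ d) ^
          (r.gcd s * cycleCount σ₁ r * cycleCount σ₂ s) := by
  classical
  let periods (q : Cycles (prodCongr σ₁ σ₂)) : ℕ × ℕ :=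
    (minimalPeriod σ₁ q.out.1, minimalPeriod σ₂ q.out.2)
  let F (rs : ℕ × ℕ) : ℕ := ∑ d ∈ (rs.1.lcm rs.2).divisors, d * cycleCount σ d
  have hfactor (q : Cycles (prodCongr σ₁ σ₂)) :
      Nat.card {y // IsPeriodicPt σ (minimalPeriod (prodCongr σ₁ σ₂) q.out) y} = F (periods q) := by
    rw [minimalPeriod_prodCongr, card_isPeriodicPt σ
      (Nat.lcm_ne_zero (σ₁.minimalPeriod_perm_pos _).ne' (σ₂.minimalPeriod_perm_pos _).ne')]
  have hmaps : ∀ q ∈ (univ : Finset (Cycles (prodCongr σ₁ σ₂))),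
      periods q ∈ Icc 1 (Fintype.card α) ×ˢ Icc 1 (Fintype.card β) := fun q _ =>
    mem_product.2 ⟨mem_Icc.2 ⟨σ₁.minimalPeriod_perm_pos _, minimalPeriod_le_card⟩,
      mem_Icc.2 ⟨σ₂.minimalPeriod_perm_pos _, minimalPeriod_le_card⟩⟩
  have hfiber {r s : ℕ} (hr : r ≠ 0) (hs : s ≠ 0) :
      #{q | periods q = (r, s)} = r.gcd s * cycleCount σ₁ r * cycleCount σ₂ s := by
    rw [← card_cycles_prodCongr σ₁ σ₂ hr hs, Nat.card_eq_fintype_card, Fintype.card_subtype]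
    simp [periods, Prod.ext_iff]
  rw [card_semiconj, prod_congr rfl fun q _ => hfactor q, ← prod_fiberwise_of_maps_to' hmaps,
    prod_product]
  refine prod_congr rfl fun r hr => prod_congr rfl fun s hs => ?_
  rw [prod_const, hfiber (Nat.one_le_iff_ne_zero.1 (mem_Icc.1 hr).1)
    (Nat.one_le_iff_ne_zero.1 (mem_Icc.1 hs).1)]

end Equiv.Perm

/-- A type synonym, so that `Perm α` acts by transport of structure rather than through the
pointwise action on the codomain. -/
def BinOp (α : Type*) : Type _ := α → α → α

namespace BinOp

variable {α : Type*}

instance [Fintype α] [DecidableEq α] : Fintype (BinOp α) :=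
  inferInstanceAs (Fintype (α → α → α))

instance : MulAction (Perm α) (BinOp α) where
  smul φ f a a' := φ (f (φ⁻¹ a) (φ⁻¹ a'))
  one_smul _ := rfl
  mul_smul _ _ _ := rfl

theorem smul_apply (φ : Perm α) (f : BinOp α) (a a' : α) :
    (φ • f) a a' = φ (f (φ⁻¹ a) (φ⁻¹ a')) := rfl

theorem smul_eq_iff (φ : Perm α) (f g : BinOp α) :
    φ • f = g ↔ ∀ a a', φ (f a a') = g (φ a) (φ a') := by
  constructor
  · rintro rfl a a'
    simp [smul_apply]
  · intro h
    funext a a'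
    rw [smul_apply, h]
    simp

theorem mem_fixedBy_iff (φ : Perm α) (f : BinOp α) :
    f ∈ fixedBy (BinOp α) φ ↔ Semiconj (uncurry f) (prodCongr φ φ) φ := by
  rw [mem_fixedBy, smul_eq_iff]
  exact ⟨fun h p => (h p.1 p.2).symm, fun h a a' => (h (a, a')).symm⟩

theorem card_orbits_mul_factorial [Fintype α] [DecidableEq α] :
    Nat.card (orbitRel.Quotient (Perm α) (BinOp α)) * (Fintype.card α).factorial =
      ∑ φ : Perm α, Nat.card {g : α × α → α // Semiconj g (prodCongr φ φ) φ} := by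
  classical
  rw [Nat.card_eq_fintype_card, ← Fintype.card_perm,
    ← sum_card_fixedBy_eq_card_orbits_mul_card_group]
  refine sum_congr rfl fun φ _ => ?_
  rw [← Nat.card_eq_fintype_card]
  exact Nat.card_congr ((Equiv.curry α α α).subtypeEquiv fun g => (mem_fixedBy_iff φ _).symm).symm

end BinOp

theorem magmaIso_iff_mem_orbit {n : ℕ} (f g : BinOp (Fin n)) :
    MagmaIso n f g ↔ g ∈ orbit (Perm (Fin n)) f :=
  exists_congr fun φ => (BinOp.smul_eq_iff φ f g).symm

/-- The number of isomorphism classes of magmas on a set with cardinality `n` equals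
`(1/n!) ∑_{σ ∈ Sₙ} ∏_{r,s=1}^n (∑_{d ∣ lcm(r,s)} d j_d(σ))^{gcd(r,s) jᵣ(σ) jₛ(σ)}`. -/
theorem card_magma_iso_classes_burnside (n : ℕ) :
    (Nat.card (Quot (MagmaIso n)) : ℚ) =
      (1 / (Nat.factorial n : ℚ)) *
        ∑ σ : Equiv.Perm (Fin n),
          ∏ r ∈ Finset.Icc 1 n, ∏ s ∈ Finset.Icc 1 n,
            (∑ d ∈ (Nat.lcm r s).divisors, (d : ℚ) * (cycleCount σ d : ℚ)) ^
              (Nat.gcd r s * cycleCount σ r * cycleCount σ s) := by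
  have hquot : Nat.card (Quot (MagmaIso n)) =
      Nat.card (orbitRel.Quotient (Perm (Fin n)) (BinOp (Fin n))) :=
    Nat.card_congr <| Quot.congr (Equiv.refl _) fun f g => (magmaIso_iff_mem_orbit f g).trans
      ((orbitRel (Perm (Fin n)) (BinOp (Fin n))).comm'.trans orbitRel_apply).symm
  have hburnside := BinOp.card_orbits_mul_factorial (α := Fin n)
  simp only [Perm.card_semiconj_prodCongr, Fintype.card_fin] at hburnside
  rw [hquot, one_div_mul_eq_div, eq_div_iff (by positivity)]
  exact_mod_cast hburnside
end

section
/- Let k, n be non-negative integers and σ a permutation of Fin n with cycle type (j_i(σ))_{i=1}^∞. Then the number of k-ary operations ∗ : (Fin n)^k → Fin n for which σ is a k-magma automorphism equals ∏_{(r_1,…,r_k) ∈ [n]^k} (∑_{d ∣ lcm(r_1,…,r_k)} d · j_d(σ))^{(r_1⋯r_k / lcm(r_1,…,r_k)) · j_{r_1}(σ) ⋯ j_{r_k}(σ)}, where lcm of the empty tuple is taken to be 1. -/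
/-!
An operation `f` admits `σ` as an automorphism exactly when it is an equivariant map from the
diagonal permutation `τ` of `(Fin n)^k` to `σ`. Such a map may be chosen freely on one
representative `a` of each `τ`-orbit, subject only to `f a` being fixed by `σ^m`, where `m`, the
length of the orbit, is the lcm of the periods of the entries of `a`; and `σ^m` has
`∑_{d ∣ m} d j_d(σ)` fixed points. The tuples whose entries have periods `r₁, …, r_k` number
`∏ rᵢ j_{rᵢ}(σ)` and fall into orbits of length `lcm r`, which gives the exponent.
-/

open Function MulAction Subgroup Finset Equiv

theorem Equiv.minimalPeriod_piCongrRight {ι : Type*} [Fintype ι] {α : ι → Type*}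
    (σ : ∀ i, Perm (α i)) (a : ∀ i, α i) :
    minimalPeriod (piCongrRight σ) a = univ.lcm fun i => minimalPeriod (σ i) (a i) :=
  minimalPeriod_piMap_fintype

namespace Equiv.Perm

variable {α β : Type*} (π : Perm α)

theorem pow_apply_eq_self_iff_minimalPeriod_dvd {n : ℕ} {x : α} :
    (π ^ n) x = x ↔ minimalPeriod π x ∣ n :=
  pow_smul_eq_iff_minimalPeriod_dvd (a := π) (b := x)

theorem zpow_apply_eq_zpow_apply_iff {i j : ℤ} {x : α} :
    (π ^ i) x = (π ^ j) x ↔ (minimalPeriod π x : ℤ) ∣ i - j := by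
  have h : (π ^ i) x = (π ^ j) ((π ^ (i - j)) x) := by
    rw [← mul_apply, ← zpow_add, add_sub_cancel]
  rw [h, (π ^ j).injective.eq_iff]
  exact zpow_smul_eq_iff_minimalPeriod_dvd (a := π) (b := x)

theorem minimalPeriod_pos [Finite α] (x : α) : 0 < minimalPeriod π x :=
  minimalPeriod_pos_of_mem_periodicPts (π.injective.mem_periodicPts x)

theorem minimalPeriod_apply_self [Finite α] (x : α) :
    minimalPeriod π (π x) = minimalPeriod π x :=
  minimalPeriod_apply (π.injective.mem_periodicPts x)

theorem card_orbit_zpowers (x : α) : Nat.card (orbit (zpowers π) x) = minimalPeriod π x :=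
  (Nat.card_congr (orbitZPowersEquiv π x)).trans (Nat.card_zmod _)

theorem zpow_apply_of_equivariant {τ : Perm β} {f : α → β} (hf : ∀ a, τ (f a) = f (π a))
    (z : ℤ) (a : α) :
    (τ ^ z) (f a) = f ((π ^ z) a) := by
  induction z using Int.induction_on generalizing a with
  | zero => rfl
  | succ i ih => rw [zpow_add_one, zpow_add_one, mul_apply, mul_apply, hf, ih]
  | pred i ih =>
    have h : τ⁻¹ (f a) = f (π⁻¹ a) := by
      rw [inv_eq_iff_eq, hf, ← mul_apply, mul_inv_cancel, one_apply]
    rw [zpow_sub_one, zpow_sub_one, mul_apply, mul_apply, h, ih]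

theorem exists_zpow_apply_out_eq (x : α) :
    ∃ z : ℤ, (π ^ z) (Quotient.mk'' x : orbitRel.Quotient (zpowers π) α).out = x := by
  obtain ⟨⟨_, z, rfl⟩, hz⟩ :=
    mem_orbit_symm.1 (Quotient.mk_out' (s₁ := orbitRel (zpowers π) α) x)
  exact ⟨z, hz⟩

theorem card_fiber_eq_mul_card_orbits [Finite α] {ι : Type*} {c : α → ι}
    (hc : ∀ x, c (π x) = c x) (v : ι) {m : ℕ} (hm : ∀ x, c x = v → minimalPeriod π x = m) :
    Nat.card {x // c x = v} =
      m * Nat.card {ω : orbitRel.Quotient (zpowers π) α // c ω.out = v} := by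
  have hc_out (x : α) : c (Quotient.mk'' x : orbitRel.Quotient (zpowers π) α).out = c x := by
    obtain ⟨z, hz⟩ := π.exists_zpow_apply_out_eq x
    -- `c` is an equivariant map from `π` to the identity permutation of `ι`.
    have := π.zpow_apply_of_equivariant (τ := 1) (fun x => (hc x).symm) z
      (Quotient.mk'' x : orbitRel.Quotient (zpowers π) α).out
    rwa [one_zpow, one_apply, hz] at this
  let e : {x // c x = v} ≃ Σ ω : {ω : orbitRel.Quotient (zpowers π) α // c ω.out = v},
      orbit (zpowers π) ω.1.out :=
    (Equiv.subtypeEquiv (selfEquivSigmaOrbits (zpowers π) α) fun x => by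
      rw [← hc_out x]; rfl).trans (Equiv.subtypeSigmaEquiv _ _)
  have := Fintype.ofFinite {ω : orbitRel.Quotient (zpowers π) α // c ω.out = v}
  rw [Nat.card_congr e, Nat.card_sigma, Nat.card_eq_fintype_card, mul_comm, ← smul_eq_mul,
    ← card_univ, ← sum_const]
  exact sum_congr rfl fun ω _ => (π.card_orbit_zpowers _).trans (hm _ ω.2)

theorem card_minimalPeriod_eq [Finite α] {d : ℕ} (hd : 0 < d) :
    Nat.card {x // minimalPeriod π x = d} = d * cycleCount π d := by
  have h := π.card_fiber_eq_mul_card_orbits π.minimalPeriod_apply_self d fun _ h => h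
  rw [cycleCount, h, Nat.mul_div_cancel_left _ hd]

theorem card_pow_apply_eq_self [Fintype α] {N : ℕ} (hN : N ≠ 0) :
    Nat.card {x // (π ^ N) x = x} = ∑ d ∈ N.divisors, d * cycleCount π d := by
  classical
  simp_rw [pow_apply_eq_self_iff_minimalPeriod_dvd, Nat.card_eq_fintype_card,
    Fintype.card_subtype]
  rw [card_eq_sum_card_fiberwise (f := minimalPeriod π) (t := N.divisors)
    fun x hx => Nat.mem_divisors.2 ⟨(mem_filter.1 hx).2, hN⟩]
  refine sum_congr rfl fun d hd => ?_
  rw [← π.card_minimalPeriod_eq (Nat.pos_of_mem_divisors hd), Nat.card_eq_fintype_card,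
    Fintype.card_subtype, filter_filter]
  exact congrArg card <| filter_congr fun x _ =>
    and_iff_right_of_imp fun h => h ▸ Nat.dvd_of_mem_divisors hd

section Equivariant

variable (τ : Perm α) (σ : Perm β)

theorem zpow_apply_eq_zpow_apply_of_pow_minimalPeriod {b : α} {x : β}
    (hx : (σ ^ minimalPeriod τ b) x = x) {i j : ℤ} (h : (τ ^ i) b = (τ ^ j) b) :
    (σ ^ i) x = (σ ^ j) x :=
  (σ.zpow_apply_eq_zpow_apply_iff).2 <|
    (Int.natCast_dvd_natCast.2 ((σ.pow_apply_eq_self_iff_minimalPeriod_dvd).1 hx)).trans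
      ((τ.zpow_apply_eq_zpow_apply_iff).1 h)

noncomputable def extendFromOrbitReps
    (g : ∀ ω : orbitRel.Quotient (zpowers τ) α, {x : β // (σ ^ minimalPeriod τ ω.out) x = x})
    (a : α) : β :=
  (σ ^ (τ.exists_zpow_apply_out_eq a).choose) (g (Quotient.mk'' a))

variable {τ σ}
variable (g : ∀ ω : orbitRel.Quotient (zpowers τ) α, {x : β // (σ ^ minimalPeriod τ ω.out) x = x})

theorem extendFromOrbitReps_eq {a : α} {z : ℤ}
    (hz : (τ ^ z) (Quotient.mk'' a : orbitRel.Quotient (zpowers τ) α).out = a) :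
    extendFromOrbitReps τ σ g a = (σ ^ z) (g (Quotient.mk'' a)) :=
  zpow_apply_eq_zpow_apply_of_pow_minimalPeriod τ σ (g _).2
    ((τ.exists_zpow_apply_out_eq a).choose_spec.trans hz.symm)

theorem extendFromOrbitReps_apply (a : α) :
    σ (extendFromOrbitReps τ σ g a) = extendFromOrbitReps τ σ g (τ a) := by
  obtain ⟨z, hz⟩ := τ.exists_zpow_apply_out_eq a
  have hmk : (Quotient.mk'' (τ a) : orbitRel.Quotient (zpowers τ) α) = Quotient.mk'' a :=
    Quotient.sound' ⟨⟨τ, mem_zpowers τ⟩, rfl⟩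
  have hz' : (τ ^ (1 + z)) (Quotient.mk'' (τ a) : orbitRel.Quotient (zpowers τ) α).out = τ a := by
    rw [hmk, zpow_one_add, mul_apply, hz]
  rw [extendFromOrbitReps_eq g hz, extendFromOrbitReps_eq g hz', zpow_one_add, mul_apply, hmk]

variable (τ σ)

noncomputable def equivariantEquivPiFixedPoints :
    {f : α → β // ∀ a, σ (f a) = f (τ a)} ≃
      ∀ ω : orbitRel.Quotient (zpowers τ) α, {x : β // (σ ^ minimalPeriod τ ω.out) x = x} where
  toFun f ω := ⟨f.1 ω.out, by
    rw [← zpow_natCast, τ.zpow_apply_of_equivariant f.2, zpow_natCast,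
      (τ.pow_apply_eq_self_iff_minimalPeriod_dvd).2 dvd_rfl]⟩
  invFun g := ⟨extendFromOrbitReps τ σ g, extendFromOrbitReps_apply g⟩
  left_inv f := Subtype.ext <| funext fun a => by
    obtain ⟨z, hz⟩ := τ.exists_zpow_apply_out_eq a
    dsimp only
    refine (extendFromOrbitReps_eq _ hz).trans ?_
    exact (τ.zpow_apply_of_equivariant f.2 z _).trans (congrArg f.1 hz)
  right_inv g := funext fun ω => Subtype.ext <| by
    have h : (Quotient.mk'' ω.out : orbitRel.Quotient (zpowers τ) α) = ω := Quotient.out_eq' ω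
    have hz :
        (τ ^ (0 : ℤ)) (Quotient.mk'' ω.out : orbitRel.Quotient (zpowers τ) α).out = ω.out := by
      rw [zpow_zero, one_apply, h]
    change extendFromOrbitReps τ σ g ω.out = g ω
    rw [extendFromOrbitReps_eq g hz, zpow_zero, one_apply, h]

theorem card_equivariant_eq_prod [Fintype (orbitRel.Quotient (zpowers τ) α)] :
    Nat.card {f : α → β // ∀ a, σ (f a) = f (τ a)} =
      ∏ ω : orbitRel.Quotient (zpowers τ) α,
        Nat.card {x : β // (σ ^ minimalPeriod τ ω.out) x = x} := by
  rw [Nat.card_congr (equivariantEquivPiFixedPoints τ σ), Nat.card_pi]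

end Equivariant

section Pi

variable {α ι : Type*} [Finite α] [Fintype ι] (σ : Perm α) {r : ι → ℕ}

theorem card_minimalPeriod_pi_eq (hr : ∀ i, 0 < r i) :
    Nat.card {a : ι → α // (fun i => minimalPeriod σ (a i)) = r} =
      ∏ i, r i * cycleCount σ (r i) := by
  rw [Nat.card_congr ((Equiv.subtypeEquivRight fun a => funext_iff).trans
    (Equiv.subtypePiEquivPi (p := fun i x => minimalPeriod σ x = r i))), Nat.card_pi]
  exact prod_congr rfl fun i _ => σ.card_minimalPeriod_eq (hr i)

theorem card_orbits_minimalPeriod_pi_eq (hr : ∀ i, 0 < r i) :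
    Nat.card {ω : orbitRel.Quotient (zpowers (piCongrRight fun _ : ι => σ)) (ι → α) //
        (fun i => minimalPeriod σ (ω.out i)) = r} =
      (∏ i, r i) / univ.lcm r * ∏ i, cycleCount σ (r i) := by
  have hL : univ.lcm r ∣ ∏ i, r i := lcm_dvd fun i _ => dvd_prod_of_mem r (mem_univ i)
  have hL_pos : 0 < univ.lcm r := Nat.pos_of_dvd_of_pos hL (prod_pos fun i _ => hr i)
  have h := Perm.card_fiber_eq_mul_card_orbits (piCongrRight fun _ : ι => σ)
    (c := fun a i => minimalPeriod σ (a i)) (m := univ.lcm r)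
    (fun a => funext fun i => σ.minimalPeriod_apply_self (a i)) r
    (fun a ha => by rw [minimalPeriod_piCongrRight, ha])
  rw [σ.card_minimalPeriod_pi_eq hr, prod_mul_distrib] at h
  rw [Nat.div_mul_right_comm hL, h, Nat.mul_div_cancel_left _ hL_pos]

end Pi

end Equiv.Perm

/-- The number of `k`-ary operations on `Fin n` admitting a given permutation `σ` as a
`k`-magma automorphism equals
`∏_{(r₁,…,r_k) ∈ [n]^k} (∑_{d ∣ lcm(r₁,…,r_k)} d j_d(σ))^{(r₁⋯r_k / lcm(r₁,…,r_k)) j_{r₁}(σ) ⋯ j_{r_k}(σ)}`,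
where `(jᵢ(σ))` is the cycle type of `σ` and the `lcm` of the empty tuple is `1`
(`Finset.lcm` over the empty type). -/
theorem card_kops_with_automorphism (n k : ℕ) (σ : Equiv.Perm (Fin n)) :
    Nat.card {f : (Fin k → Fin n) → Fin n //
        ∀ a : Fin k → Fin n, σ (f a) = f (fun i => σ (a i))} =
      ∏ r ∈ Fintype.piFinset (fun _ : Fin k => Finset.Icc 1 n),
        (∑ d ∈ (Finset.univ.lcm r).divisors, d * cycleCount σ d) ^
          (((∏ i, r i) / Finset.univ.lcm r) * ∏ i, cycleCount σ (r i)) := by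
  classical
  set τ := piCongrRight fun _ : Fin k => σ
  let c (a : Fin k → Fin n) (i : Fin k) : ℕ := minimalPeriod σ (a i)
  have hc : ∀ ω ∈ (univ : Finset (orbitRel.Quotient (zpowers τ) (Fin k → Fin n))),
      c ω.out ∈ Fintype.piFinset fun _ : Fin k => Icc 1 n := fun ω _ =>
    Fintype.mem_piFinset.2 fun i => mem_Icc.2
      ⟨σ.minimalPeriod_pos _, (minimalPeriod_le_card).trans_eq (Fintype.card_fin n)⟩
  calc _ = ∏ ω : orbitRel.Quotient (zpowers τ) (Fin k → Fin n),
        Nat.card {x // (σ ^ minimalPeriod τ ω.out) x = x} := Perm.card_equivariant_eq_prod τ σ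
    _ = ∏ ω : orbitRel.Quotient (zpowers τ) (Fin k → Fin n),
        ∑ d ∈ (univ.lcm (c ω.out)).divisors, d * cycleCount σ d := by
      refine prod_congr rfl fun ω _ => ?_
      rw [σ.card_pow_apply_eq_self (Perm.minimalPeriod_pos τ _).ne', minimalPeriod_piCongrRight]
    _ = _ := by
      rw [← prod_fiberwise_of_maps_to' hc
        fun r => ∑ d ∈ (univ.lcm r).divisors, d * cycleCount σ d]
      refine prod_congr rfl fun r hr => ?_
      have hr_pos i : 0 < r i := (mem_Icc.1 (Fintype.mem_piFinset.1 hr i)).1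
      rw [prod_const, ← σ.card_orbits_minimalPeriod_pi_eq hr_pos, Nat.card_eq_fintype_card,
        Fintype.card_subtype]
end
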